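/- arXiv:2401.06023 — 9 statements merged into one kernel-verified Lean document; each statement's English description precedes it below -/
import Mathlib

section
/- A symmetric 2×2 real matrix A is copositive (i.e., xᵀAx ≥ 0 for all x with nonnegative entries) if and only if there exist t₁, t₂, λ ≥ 0 such that A = [[t₁², -t₁t₂+λ], [-t₁t₂+λ, t₂²]]. -/
open Matrix

def Copositive {n : ℕ} (A : Matrix (Fin n) (Fin n) ℝ) : Prop :=
  ∀ x : Fin n → ℝ, (∀ i, 0 ≤ x i) → 0 ≤ x ⬝ᵥ A.mulVec x

theorem stmt_0 (A : Matrix (Fin 2) (Fin 2) ℝ) (hA : A.IsSymm) :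
    Copositive A ↔
      ∃ t₁ t₂ lam : ℝ, 0 ≤ t₁ ∧ 0 ≤ t₂ ∧ 0 ≤ lam ∧
        A = !![t₁ ^ 2, -t₁ * t₂ + lam; -t₁ * t₂ + lam, t₂ ^ 2] := by
  have hsym : A 1 0 = A 0 1 := by
    have := hA.apply 0 1
    simpa using this
  constructor
  · intro h
    have ha : 0 ≤ A 0 0 := by
      have := h ![1, 0] (by intro i; fin_cases i <;> norm_num)
      simpa [dotProduct, mulVec, Fin.sum_univ_two] using this
    have hc : 0 ≤ A 1 1 := by
      have := h ![0, 1] (by intro i; fin_cases i <;> norm_num)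
      simpa [dotProduct, mulVec, Fin.sum_univ_two] using this
    have hsa : Real.sqrt (A 0 0) ^ 2 = A 0 0 := Real.sq_sqrt ha
    have hsc : Real.sqrt (A 1 1) ^ 2 = A 1 1 := Real.sq_sqrt hc
    refine ⟨Real.sqrt (A 0 0), Real.sqrt (A 1 1),
      A 0 1 + Real.sqrt (A 0 0) * Real.sqrt (A 1 1),
      Real.sqrt_nonneg _, Real.sqrt_nonneg _, ?_, ?_⟩
    · have key := h ![Real.sqrt (A 1 1), Real.sqrt (A 0 0)]
        (by intro i; fin_cases i <;> simp [Real.sqrt_nonneg])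
      simp only [dotProduct, mulVec, Fin.sum_univ_two, Matrix.cons_val_zero,
        Matrix.cons_val_one, Matrix.head_cons, hsym] at key
      rcases eq_or_lt_of_le (mul_nonneg (Real.sqrt_nonneg (A 0 0)) (Real.sqrt_nonneg (A 1 1)))
        with heq | hpos
      · have hb0 : 0 ≤ A 0 1 := by
          by_contra hb
          push_neg at hb
          rcases mul_eq_zero.mp heq.symm with h0 | h0
          · have ha0 : A 0 0 = 0 := by nlinarith
            have hs : (0:ℝ) ≤ (A 1 1 + 1) / (-(2 * A 0 1)) :=
              div_nonneg (by linarith) (by linarith)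
            have key2 := h ![(A 1 1 + 1) / (-(2 * A 0 1)), 1]
              (by intro i; fin_cases i <;> simp [hs])
            simp only [dotProduct, mulVec, Fin.sum_univ_two, Matrix.cons_val_zero,
              Matrix.cons_val_one, Matrix.head_cons, hsym] at key2
            have hbne : A 0 1 ≠ 0 := ne_of_lt hb
            have hx : A 0 1 * ((A 1 1 + 1) / (-(2 * A 0 1))) = -(A 1 1 + 1) / 2 := by
              field_simp
            rw [ha0] at key2
            nlinarith [key2, hx]
          · have hc0 : A 1 1 = 0 := by nlinarith
            have hs : (0:ℝ) ≤ (A 0 0 + 1) / (-(2 * A 0 1)) :=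
              div_nonneg (by linarith) (by linarith)
            have key2 := h ![1, (A 0 0 + 1) / (-(2 * A 0 1))]
              (by intro i; fin_cases i <;> simp [hs])
            simp only [dotProduct, mulVec, Fin.sum_univ_two, Matrix.cons_val_zero,
              Matrix.cons_val_one, Matrix.head_cons, hsym] at key2
            have hbne : A 0 1 ≠ 0 := ne_of_lt hb
            have hx : A 0 1 * ((A 0 0 + 1) / (-(2 * A 0 1))) = -(A 0 0 + 1) / 2 := by
              field_simp
            rw [hc0] at key2
            nlinarith [key2, hx]
        nlinarith [mul_nonneg (Real.sqrt_nonneg (A 0 0)) (Real.sqrt_nonneg (A 1 1))]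
      · nlinarith [key, hsa, hsc, hpos]
    · ext i j
      fin_cases i <;> fin_cases j <;>
        simp [hsa, hsc, hsym] <;> ring
  · rintro ⟨t₁, t₂, l, ht₁, ht₂, hl, rfl⟩
    intro x hx
    simp only [dotProduct, mulVec, Fin.sum_univ_two, Matrix.cons_val', Matrix.cons_val_zero,
      Matrix.cons_val_one, Matrix.head_cons, Matrix.empty_val', Matrix.cons_val_fin_one,
      Matrix.head_fin_const, Matrix.of_apply]
    nlinarith [sq_nonneg (t₁ * x 0 - t₂ * x 1), mul_nonneg hl (mul_nonneg (hx 0) (hx 1)),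
      mul_nonneg (hx 0) (hx 1)]
end

section
/- Let A be a symmetric n×n real copositive matrix and y a vector with strictly positive components such that yᵀAy = 0. Then Ay = 0. -/
open Matrix

theorem stmt_3 {n : ℕ} (A : Matrix (Fin n) (Fin n) ℝ) (hA : A.IsSymm)
    (hcop : Copositive A) (y : Fin n → ℝ) (hy : ∀ i, 0 < y i)
    (hquad : y ⬝ᵥ A.mulVec y = 0) :
    A.mulVec y = 0 := by
  funext j
  simp only [Pi.zero_apply]
  set d : Fin n → ℝ := Pi.single j 1 with hd
  set c : ℝ := A.mulVec y j with hc
  set b : ℝ := d ⬝ᵥ A.mulVec d with hb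
  have hdc : d ⬝ᵥ A.mulVec y = c := by
    simp [hd, single_dotProduct, hc]
  have hsymm : y ⬝ᵥ A.mulVec d = c := by
    rw [Matrix.dotProduct_mulVec]
    have hv : A.vecMul y = A.mulVec y := by
      conv_lhs => rw [← hA]
      exact Matrix.vecMul_transpose A y
    rw [hv]
    simp [hd, dotProduct_single, hc]
  have hkey : ∀ t : ℝ, |t| ≤ y j → 0 ≤ 2*t*c + t^2*b := by
    intro t ht
    have hx : ∀ i, 0 ≤ (y + t • d) i := by
      intro i
      by_cases h : i = j
      · subst h
        simp only [Pi.add_apply, Pi.smul_apply, hd, Pi.single_eq_same, smul_eq_mul, mul_one]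
        have := abs_le.1 ht
        linarith
      · simp only [Pi.add_apply, Pi.smul_apply, hd, Pi.single_eq_of_ne h, smul_eq_mul, mul_zero,
          add_zero]
        exact (hy i).le
    have h0 := hcop (y + t • d) hx
    have hexp : (y + t • d) ⬝ᵥ A.mulVec (y + t • d) = 2*t*c + t^2*b := by
      simp only [Matrix.mulVec_add, Matrix.mulVec_smul, dotProduct_add, add_dotProduct,
        dotProduct_smul, smul_dotProduct, smul_eq_mul, hquad, hsymm, hdc]
      ring
    rw [hexp] at h0
    exact h0
  by_contra hc0
  set m : ℝ := min (y j/(|c|+1)) (1/(|b|+1)) with hm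
  have habsc : 0 < |c| := abs_pos.mpr hc0
  have hm0 : 0 < m := by
    apply lt_min
    · exact div_pos (hy j) (by positivity)
    · positivity
  have h1 : m ≤ 1/(|b|+1) := min_le_right _ _
  have h2 : m ≤ y j/(|c|+1) := min_le_left _ _
  rw [le_div_iff₀ (by positivity : (0:ℝ) < |b|+1)] at h1
  rw [le_div_iff₀ (by positivity : (0:ℝ) < |c|+1)] at h2
  have hmb : m * |b| < 1 := by nlinarith [abs_nonneg b]
  have hmy : |(-c) * m| ≤ y j := by
    rw [abs_mul, abs_neg, abs_of_pos hm0]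
    nlinarith
  have hk := hkey ((-c) * m) hmy
  have hbb : b ≤ |b| := le_abs_self b
  have hc2 : 0 < c^2 := by positivity
  have key1 : m^2*b ≤ m^2*|b| := mul_le_mul_of_nonneg_left hbb (sq_nonneg m)
  have key2 : m*(m*|b|) < m*1 := mul_lt_mul_of_pos_left hmb hm0
  nlinarith [mul_pos hc2 hm0, mul_le_mul_of_nonneg_left key1 hc2.le,
    mul_lt_mul_of_pos_left key2 hc2]
end

section
/- Let A be a symmetric 3×3 real copositive matrix with unit diagonal, and suppose y ∈ ℝ³ is a nonzero nonnegative vector with y₁ = 0 and yᵀAy = 0. Then a₂₃ = -1 and y₂ = y₃ > 0. -/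
open Matrix

theorem stmt_4 (A : Matrix (Fin 3) (Fin 3) ℝ) (hA : A.IsSymm)
    (hdiag : ∀ i, A i i = 1) (hcop : Copositive A)
    (y : Fin 3 → ℝ) (hy0 : ∀ i, 0 ≤ y i) (hyne : y ≠ 0) (hy1 : y 0 = 0)
    (hquad : y ⬝ᵥ A.mulVec y = 0) :
    A 1 2 = -1 ∧ y 1 = y 2 ∧ 0 < y 1 := by
  have hs : A 2 1 = A 1 2 := hA.apply 1 2
  have ha : 0 ≤ 2 + 2 * A 1 2 := by
    have := hcop ![0, 1, 1] (by
      intro i; fin_cases i <;> norm_num)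
    simp [dotProduct, Matrix.mulVec, Fin.sum_univ_three, hdiag, hs] at this
    linarith
  have hq : y 1 * y 1 + y 2 * y 2 + 2 * A 1 2 * (y 1 * y 2) = 0 := by
    have := hquad
    simp only [dotProduct, Matrix.mulVec, Fin.sum_univ_three, hdiag, hs, hy1] at this
    ring_nf at this ⊢
    linarith [this]
  have hy12 : y 1 = y 2 := by
    nlinarith [sq_nonneg (y 1 - y 2), mul_nonneg (hy0 1) (hy0 2),
      mul_nonneg (mul_nonneg ha (hy0 1)) (hy0 2)]
  have hy1pos : 0 < y 1 := by
    rcases lt_or_eq_of_le (hy0 1) with h | h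
    · exact h
    · exfalso; apply hyne
      funext i; fin_cases i
      · simpa using hy1
      · simpa using h.symm
      · show y 2 = 0
        rw [← hy12]; exact h.symm
  refine ⟨?_, hy12, hy1pos⟩
  have := hq
  rw [← hy12] at this
  nlinarith [this, mul_pos hy1pos hy1pos, ha]
end

section
/- Let A be a symmetric 3×3 real copositive matrix with unit diagonal lying on the boundary of the copositive cone (i.e., yᵀAy = 0 for some nonzero nonnegative y), and suppose a₁₂ + a₁₃ + a₂₃ ≤ -1. Then A is singular and has a null vector with nonnegative components. -/
open Matrix

lemma key (a b c y0 y1 y2 : ℝ) (ha : -1 ≤ a) (hb : -1 ≤ b) (hc : -1 ≤ c)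
    (hs : a + b + c ≤ -1) (h0 : 0 ≤ y0) (h1 : 0 ≤ y1) (h2 : 0 ≤ y2)
    (hQ : y0*(y0 + a*y1 + b*y2) + y1*(a*y0 + y1 + c*y2) + y2*(b*y0 + c*y1 + y2) = 0)
    (g0 : 0 ≤ y0 + a*y1 + b*y2) (g1 : 0 ≤ a*y0 + y1 + c*y2) (g2 : 0 ≤ b*y0 + c*y1 + y2)
    (hne : ¬(y0 = 0 ∧ y1 = 0 ∧ y2 = 0)) :
    y0 + a*y1 + b*y2 = 0 ∧ a*y0 + y1 + c*y2 = 0 ∧ b*y0 + c*y1 + y2 = 0 := by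
  have p0 : y0 * (y0 + a*y1 + b*y2) = 0 := by
    nlinarith [mul_nonneg h1 g1, mul_nonneg h2 g2, mul_nonneg h0 g0]
  have p1 : y1 * (a*y0 + y1 + c*y2) = 0 := by
    nlinarith [mul_nonneg h1 g1, mul_nonneg h2 g2, mul_nonneg h0 g0]
  have p2 : y2 * (b*y0 + c*y1 + y2) = 0 := by
    nlinarith [mul_nonneg h1 g1, mul_nonneg h2 g2, mul_nonneg h0 g0]
  refine ⟨?_, ?_, ?_⟩
  · rcases h0.eq_or_lt with rfl | hy0
    · have heq : y1 = y2 := by nlinarith [sq_nonneg (y1 - y2), mul_nonneg (mul_nonneg (by linarith : (0:ℝ) ≤ 1 + c) h1) h2]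
      rcases h1.eq_or_lt with rfl | hy1
      · exact absurd ⟨rfl, rfl, heq.symm⟩ hne
      · have hc1 : c = -1 := by nlinarith
        nlinarith
    · have := mul_left_cancel₀ (ne_of_gt hy0) (by linarith [p0] : y0 * (y0 + a*y1 + b*y2) = y0 * 0)
      linarith
  · rcases h1.eq_or_lt with rfl | hy1
    · have heq : y0 = y2 := by nlinarith [sq_nonneg (y0 - y2), mul_nonneg (mul_nonneg (by linarith : (0:ℝ) ≤ 1 + b) h0) h2]
      rcases h0.eq_or_lt with rfl | hy0
      · exact absurd ⟨rfl, rfl, heq.symm⟩ hne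
      · have hb1 : b = -1 := by nlinarith
        nlinarith
    · have := mul_left_cancel₀ (ne_of_gt hy1) (by linarith [p1] : y1 * (a*y0 + y1 + c*y2) = y1 * 0)
      linarith
  · rcases h2.eq_or_lt with rfl | hy2
    · have heq : y0 = y1 := by nlinarith [sq_nonneg (y0 - y1), mul_nonneg (mul_nonneg (by linarith : (0:ℝ) ≤ 1 + a) h0) h1]
      rcases h0.eq_or_lt with rfl | hy0
      · exact absurd ⟨rfl, heq.symm, rfl⟩ hne
      · have ha1 : a = -1 := by nlinarith
        nlinarith
    · have := mul_left_cancel₀ (ne_of_gt hy2) (by linarith [p2] : y2 * (b*y0 + c*y1 + y2) = y2 * 0)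
      linarith

set_option maxHeartbeats 1600000 in
theorem stmt_6 (A : Matrix (Fin 3) (Fin 3) ℝ) (hA : A.IsSymm)
    (hdiag : ∀ i, A i i = 1) (hcop : Copositive A)
    (hbd : ∃ y : Fin 3 → ℝ, (∀ i, 0 ≤ y i) ∧ y ≠ 0 ∧ y ⬝ᵥ A.mulVec y = 0)
    (hsum : A 0 1 + A 0 2 + A 1 2 ≤ -1) :
    A.det = 0 ∧ ∃ p : Fin 3 → ℝ, (∀ i, 0 ≤ p i) ∧ p ≠ 0 ∧ A.mulVec p = 0 := by
  obtain ⟨y, hy, hyne, hyQ⟩ := hbd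
  have d0 := hdiag 0; have d1 := hdiag 1; have d2 := hdiag 2
  have s10 : A 1 0 = A 0 1 := hA.apply 0 1
  have s20 : A 2 0 = A 0 2 := hA.apply 0 2
  have s21 : A 2 1 = A 1 2 := hA.apply 1 2
  set a := A 0 1 with ha_def
  set b := A 0 2 with hb_def
  set c := A 1 2 with hc_def
  have hQ : y 0 * (y 0 + a * y 1 + b * y 2) + y 1 * (a * y 0 + y 1 + c * y 2)
      + y 2 * (b * y 0 + c * y 1 + y 2) = 0 := by
    rw [← hyQ]
    simp [dotProduct, Matrix.mulVec, Fin.sum_univ_three, d0, d1, d2, s10, s20, s21, ← ha_def, ← hb_def, ← hc_def]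
  have ha : -1 ≤ a := by
    have h := hcop ![1,1,0] (by intro i; fin_cases i <;> norm_num)
    simp [dotProduct, Matrix.mulVec, Fin.sum_univ_three, d0, d1, d2, s10, s20, s21, ← ha_def, ← hb_def, ← hc_def] at h
    linarith
  have hb : -1 ≤ b := by
    have h := hcop ![1,0,1] (by intro i; fin_cases i <;> norm_num)
    simp [dotProduct, Matrix.mulVec, Fin.sum_univ_three, d0, d1, d2, s10, s20, s21, ← ha_def, ← hb_def, ← hc_def] at h
    linarith
  have hc : -1 ≤ c := by
    have h := hcop ![0,1,1] (by intro i; fin_cases i <;> norm_num)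
    simp [dotProduct, Matrix.mulVec, Fin.sum_univ_three, d0, d1, d2, s10, s20, s21, ← ha_def, ← hb_def, ← hc_def] at h
    linarith
  have g0 : 0 ≤ y 0 + a * y 1 + b * y 2 := by
    by_contra hg; push_neg at hg
    have ht : y 0 + a * y 1 + b * y 2 < 0 := hg
    have h := hcop ![y 0 - (y 0 + a * y 1 + b * y 2), y 1, y 2] (by
      intro i; fin_cases i
      · simp; nlinarith [hy 0, hg]
      · simpa using hy 1
      · simpa using hy 2)
    simp [dotProduct, Matrix.mulVec, Fin.sum_univ_three, d0, d1, d2, s10, s20, s21, ← ha_def, ← hb_def, ← hc_def] at h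
    nlinarith [hQ, mul_pos (neg_pos.mpr hg) (neg_pos.mpr hg)]
  have g1 : 0 ≤ a * y 0 + y 1 + c * y 2 := by
    by_contra hg; push_neg at hg
    have ht : a * y 0 + y 1 + c * y 2 < 0 := hg
    have h := hcop ![y 0, y 1 - (a * y 0 + y 1 + c * y 2), y 2] (by
      intro i; fin_cases i
      · simpa using hy 0
      · simp; nlinarith [hy 1, hg]
      · simpa using hy 2)
    simp [dotProduct, Matrix.mulVec, Fin.sum_univ_three, d0, d1, d2, s10, s20, s21, ← ha_def, ← hb_def, ← hc_def] at h
    nlinarith [hQ, mul_pos (neg_pos.mpr hg) (neg_pos.mpr hg)]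
  have g2 : 0 ≤ b * y 0 + c * y 1 + y 2 := by
    by_contra hg; push_neg at hg
    have ht : b * y 0 + c * y 1 + y 2 < 0 := hg
    have h := hcop ![y 0, y 1, y 2 - (b * y 0 + c * y 1 + y 2)] (by
      intro i; fin_cases i
      · simpa using hy 0
      · simpa using hy 1
      · simp; nlinarith [hy 2, hg])
    simp [dotProduct, Matrix.mulVec, Fin.sum_univ_three, d0, d1, d2, s10, s20, s21, ← ha_def, ← hb_def, ← hc_def] at h
    nlinarith [hQ, mul_pos (neg_pos.mpr hg) (neg_pos.mpr hg)]
  have hne : ¬(y 0 = 0 ∧ y 1 = 0 ∧ y 2 = 0) := by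
    rintro ⟨e0, e1, e2⟩
    apply hyne
    funext i; fin_cases i <;> assumption
  obtain ⟨e0, e1, e2⟩ := key a b c (y 0) (y 1) (y 2) ha hb hc hsum (hy 0) (hy 1) (hy 2) hQ g0 g1 g2 hne
  have hmul : A.mulVec y = 0 := by
    funext i; fin_cases i <;>
      · simp [Matrix.mulVec, dotProduct, Fin.sum_univ_three, d0, d1, d2, s10, s20, s21, ← ha_def, ← hb_def, ← hc_def]
        linarith
  refine ⟨?_, y, hy, hyne, hmul⟩
  rw [← Matrix.exists_mulVec_eq_zero_iff]
  exact ⟨y, hyne, hmul⟩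
end

section
/- Let A be a symmetric n×n real matrix such that Ap = 0 for some vector p with strictly positive components. Then A is copositive if and only if A is positive semi-definite. -/
open Matrix

theorem stmt_8 {n : ℕ} (A : Matrix (Fin n) (Fin n) ℝ) (hA : A.IsSymm)
    (p : Fin n → ℝ) (hp : ∀ i, 0 < p i) (hnull : A.mulVec p = 0) :
    Copositive A ↔ ∀ x : Fin n → ℝ, 0 ≤ x ⬝ᵥ A.mulVec x := by
  constructor
  · intro hcop x
    have hvm : p ᵥ* A = 0 := by
      have := Matrix.mulVec_transpose A p
      rw [hA] at this
      rw [← this, hnull]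
    set t : ℝ := ∑ j, |x j / p j| with ht
    have htnn : ∀ i, |x i / p i| ≤ t := by
      intro i
      exact Finset.single_le_sum (f := fun j => |x j / p j|) (fun j _ => abs_nonneg _) (Finset.mem_univ i)
    have hy : ∀ i, 0 ≤ x i + t * p i := by
      intro i
      have h1 : |x i| / p i ≤ t := by
        have := htnn i; rwa [abs_div, abs_of_pos (hp i)] at this
      have h2 : |x i| ≤ t * p i := by
        rw [div_le_iff₀ (hp i)] at h1; linarith
      have := neg_abs_le (x i)
      linarith
    have key := hcop (x + t • p) hy
    have hexp : (x + t • p) ⬝ᵥ A.mulVec (x + t • p) = x ⬝ᵥ A.mulVec x := by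
      rw [Matrix.mulVec_add, Matrix.mulVec_smul, hnull, smul_zero, add_zero,
        add_dotProduct, smul_dotProduct]
      have hpAx : p ⬝ᵥ A.mulVec x = 0 := by
        rw [Matrix.dotProduct_mulVec, hvm, zero_dotProduct]
      rw [hpAx, smul_zero, add_zero]
    rwa [hexp] at key
  · intro h x _
    exact h x
end

section
/- Let p ∈ ℝ³ with strictly positive components and let A be the symmetric matrix with unit diagonal and a₁₂ = (p₃²-p₁²-p₂²)/(2p₁p₂), a₁₃ = (p₂²-p₁²-p₃²)/(2p₁p₃), a₂₃ = (p₁²-p₂²-p₃²)/(2p₂p₃). Then A is copositive if and only if p₁ ≤ p₂+p₃, p₂ ≤ p₁+p₃, and p₃ ≤ p₁+p₂. -/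
open Matrix

lemma quad_aux (p₁ p₂ p₃ : ℝ) (hp₁ : 0 < p₁) (hp₂ : 0 < p₂) (hp₃ : 0 < p₃)
    (h1 : p₁ ≤ p₂ + p₃) (h2 : p₂ ≤ p₁ + p₃) (h3 : p₃ ≤ p₁ + p₂) (y0 y1 y2 : ℝ) :
    0 ≤ y0 * (y0 + (p₃ ^ 2 - p₁ ^ 2 - p₂ ^ 2) / (2 * p₁ * p₂) * y1 +
          (p₂ ^ 2 - p₁ ^ 2 - p₃ ^ 2) / (2 * p₁ * p₃) * y2) +
        y1 * ((p₃ ^ 2 - p₁ ^ 2 - p₂ ^ 2) / (2 * p₁ * p₂) * y0 + y1 +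
          (p₁ ^ 2 - p₂ ^ 2 - p₃ ^ 2) / (2 * p₂ * p₃) * y2) +
        y2 * ((p₂ ^ 2 - p₁ ^ 2 - p₃ ^ 2) / (2 * p₁ * p₃) * y0 +
          (p₁ ^ 2 - p₂ ^ 2 - p₃ ^ 2) / (2 * p₂ * p₃) * y1 + y2) := by
  have key : y0 * (y0 + (p₃ ^ 2 - p₁ ^ 2 - p₂ ^ 2) / (2 * p₁ * p₂) * y1 +
          (p₂ ^ 2 - p₁ ^ 2 - p₃ ^ 2) / (2 * p₁ * p₃) * y2) +
        y1 * ((p₃ ^ 2 - p₁ ^ 2 - p₂ ^ 2) / (2 * p₁ * p₂) * y0 + y1 +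
          (p₁ ^ 2 - p₂ ^ 2 - p₃ ^ 2) / (2 * p₂ * p₃) * y2) +
        y2 * ((p₂ ^ 2 - p₁ ^ 2 - p₃ ^ 2) / (2 * p₁ * p₃) * y0 +
          (p₁ ^ 2 - p₂ ^ 2 - p₃ ^ 2) / (2 * p₂ * p₃) * y1 + y2) =
        (p₁ * p₂ * p₃ * (y0 ^ 2 + y1 ^ 2 + y2 ^ 2)
          + p₃ * (p₃ ^ 2 - p₁ ^ 2 - p₂ ^ 2) * (y0 * y1)
          + p₂ * (p₂ ^ 2 - p₁ ^ 2 - p₃ ^ 2) * (y0 * y2)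
          + p₁ * (p₁ ^ 2 - p₂ ^ 2 - p₃ ^ 2) * (y1 * y2)) / (p₁ * p₂ * p₃) := by
    field_simp
    ring
  rw [key]
  apply div_nonneg _ (by positivity)
  have e1 : 0 ≤ (p₁ - p₂ + p₃) * (p₁ + p₂ - p₃) *
      ((p₂ * y0 - p₁ * y1) + (p₃ * y0 - p₁ * y2)) ^ 2 :=
    mul_nonneg (mul_nonneg (by linarith) (by linarith)) (sq_nonneg _)
  have e2 : 0 ≤ (p₂ + p₃ - p₁) * (p₁ + p₂ + p₃) *
      ((p₂ * y0 - p₁ * y1) - (p₃ * y0 - p₁ * y2)) ^ 2 :=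
    mul_nonneg (mul_nonneg (by linarith) (by linarith)) (sq_nonneg _)
  have h4 : 0 ≤ (4 * p₁) * (p₁ * p₂ * p₃ * (y0 ^ 2 + y1 ^ 2 + y2 ^ 2)
          + p₃ * (p₃ ^ 2 - p₁ ^ 2 - p₂ ^ 2) * (y0 * y1)
          + p₂ * (p₂ ^ 2 - p₁ ^ 2 - p₃ ^ 2) * (y0 * y2)
          + p₁ * (p₁ ^ 2 - p₂ ^ 2 - p₃ ^ 2) * (y1 * y2)) := by
    nlinarith [e1, e2]
  nlinarith [h4, hp₁]

theorem stmt_11 (p₁ p₂ p₃ : ℝ) (hp₁ : 0 < p₁) (hp₂ : 0 < p₂) (hp₃ : 0 < p₃) :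
    Copositive
        !![1, (p₃ ^ 2 - p₁ ^ 2 - p₂ ^ 2) / (2 * p₁ * p₂),
            (p₂ ^ 2 - p₁ ^ 2 - p₃ ^ 2) / (2 * p₁ * p₃);
          (p₃ ^ 2 - p₁ ^ 2 - p₂ ^ 2) / (2 * p₁ * p₂), 1,
            (p₁ ^ 2 - p₂ ^ 2 - p₃ ^ 2) / (2 * p₂ * p₃);
          (p₂ ^ 2 - p₁ ^ 2 - p₃ ^ 2) / (2 * p₁ * p₃),
            (p₁ ^ 2 - p₂ ^ 2 - p₃ ^ 2) / (2 * p₂ * p₃), 1] ↔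
      p₁ ≤ p₂ + p₃ ∧ p₂ ≤ p₁ + p₃ ∧ p₃ ≤ p₁ + p₂ := by
  constructor
  · intro h
    have h112 : (p₃ ^ 2 - p₁ ^ 2 - p₂ ^ 2) / (2 * p₁ * p₂) * (2 * p₁ * p₂)
        = p₃ ^ 2 - p₁ ^ 2 - p₂ ^ 2 := div_mul_cancel₀ _ (by positivity)
    have h113 : (p₂ ^ 2 - p₁ ^ 2 - p₃ ^ 2) / (2 * p₁ * p₃) * (2 * p₁ * p₃)
        = p₂ ^ 2 - p₁ ^ 2 - p₃ ^ 2 := div_mul_cancel₀ _ (by positivity)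
    have hA := h ![1, 1, 0] (by intro i; fin_cases i <;> norm_num)
    have hB := h ![1, 0, 1] (by intro i; fin_cases i <;> norm_num)
    simp [dotProduct, mulVec, Fin.sum_univ_three] at hA hB
    refine ⟨?_, ?_, ?_⟩
    · nlinarith [mul_pos hp₁ hp₂, mul_pos hp₂ hp₃, sq_nonneg (p₁ - p₂ - p₃), sq_nonneg (p₁ - p₂ + p₃)]
    · nlinarith [mul_pos hp₁ hp₂, mul_pos hp₁ hp₃, sq_nonneg (p₂ - p₁ - p₃), sq_nonneg (p₂ - p₁ + p₃)]
    · nlinarith [mul_pos hp₁ hp₃, mul_pos hp₁ hp₂, sq_nonneg (p₃ - p₁ - p₂), sq_nonneg (p₃ - p₁ + p₂)]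
  · rintro ⟨h1, h2, h3⟩ x hx
    simp [dotProduct, mulVec, Fin.sum_univ_three]
    linarith [quad_aux p₁ p₂ p₃ hp₁ hp₂ hp₃ h1 h2 h3 (x 0) (x 1) (x 2)]
end

section
/- Let p ∈ ℝ³ with strictly positive components satisfying the strict triangle inequalities p₁ < p₂+p₃, p₂ < p₁+p₃, p₃ < p₁+p₂. Then the symmetric matrix A with unit diagonal and a₁₂ = (p₃²-p₁²-p₂²)/(2p₁p₂), a₁₃ = (p₂²-p₁²-p₃²)/(2p₁p₃), a₂₃ = (p₁²-p₂²-p₃²)/(2p₂p₃) has rank exactly 2. -/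
/-!
The entries of the matrix are minus the cosines of the angles of the triangle with sides
`p₁, p₂, p₃`. Its rows applied to `p` are the projection formulas `p₁ = p₂ cos γ + p₃ cos β`, …,
so `p` spans a kernel direction and the rank is at most 2. The leading `2 × 2` minor is
`1 - cos² γ = sin² γ > 0`, so the rank is at least 2.
-/

open Matrix

theorem Matrix.rank_lt_card_width_of_mulVec_eq_zero {m n K : Type*} [Fintype n] [Field K]
    (A : Matrix m n K) {v : n → K} (hv : v ≠ 0) (hAv : A *ᵥ v = 0) :
    A.rank < Fintype.card n := by
  have : Nontrivial (LinearMap.ker A.mulVecLin) :=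
    ⟨⟨⟨v, hAv⟩, 0, fun h ↦ hv (congrArg Subtype.val h)⟩⟩
  have hker := Module.finrank_pos (R := K) (M := LinearMap.ker A.mulVecLin)
  have hrank_nullity := LinearMap.finrank_range_add_finrank_ker A.mulVecLin
  rw [Module.finrank_fintype_fun_eq_card] at hrank_nullity
  rw [rank]
  omega

theorem Matrix.card_le_rank_of_det_submatrix_ne_zero {m n ι K : Type*} [Fintype n] [Fintype ι]
    [DecidableEq ι] [Field K] (A : Matrix m n K) (r : ι → m) (c : ι → n)
    (h : (A.submatrix r c).det ≠ 0) : Fintype.card ι ≤ A.rank :=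
  (rank_of_det_ne_zero h).symm.le.trans (rank_submatrix_le A r c)

theorem sq_cosine_lt_one_of_triangle {x y z : ℝ} (hx : 0 < x) (hy : 0 < y)
    (hxy : x < y + z) (hyx : y < x + z) (hz : z < x + y) :
    ((z ^ 2 - x ^ 2 - y ^ 2) / (2 * x * y)) ^ 2 < 1 := by
  have heron : (2 * x * y) ^ 2 - (z ^ 2 - x ^ 2 - y ^ 2) ^ 2
      = (x + y + z) * (x + y - z) * (z + x - y) * (z - x + y) := by ring
  rw [div_pow, div_lt_one (by positivity)]
  have hpos : 0 < (x + y + z) * (x + y - z) * (z + x - y) * (z - x + y) := by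
    apply mul_pos (mul_pos (mul_pos _ _) _) _ <;> linarith
  linarith

theorem stmt_12 (p₁ p₂ p₃ : ℝ) (hp₁ : 0 < p₁) (hp₂ : 0 < p₂) (hp₃ : 0 < p₃)
    (h₁ : p₁ < p₂ + p₃) (h₂ : p₂ < p₁ + p₃) (h₃ : p₃ < p₁ + p₂) :
    (!![1, (p₃ ^ 2 - p₁ ^ 2 - p₂ ^ 2) / (2 * p₁ * p₂),
          (p₂ ^ 2 - p₁ ^ 2 - p₃ ^ 2) / (2 * p₁ * p₃);
        (p₃ ^ 2 - p₁ ^ 2 - p₂ ^ 2) / (2 * p₁ * p₂), 1,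
          (p₁ ^ 2 - p₂ ^ 2 - p₃ ^ 2) / (2 * p₂ * p₃);
        (p₂ ^ 2 - p₁ ^ 2 - p₃ ^ 2) / (2 * p₁ * p₃),
          (p₁ ^ 2 - p₂ ^ 2 - p₃ ^ 2) / (2 * p₂ * p₃), 1] : Matrix (Fin 3) (Fin 3) ℝ).rank
      = 2 := by
  apply le_antisymm
  · refine Nat.le_of_lt_succ ((rank_lt_card_width_of_mulVec_eq_zero _ (v := ![p₁, p₂, p₃])
      (by simp [hp₁.ne']) ?_).trans_eq (Fintype.card_fin 3))
    ext i
    fin_cases i <;>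
      simp only [Fin.zero_eta, Fin.mk_one, Fin.reduceFinMk, mulVec, dotProduct, Fin.sum_univ_three,
        of_apply, cons_val', cons_val_fin_one, cons_val_zero, cons_val_one, cons_val,
        Pi.zero_apply] <;>
      field_simp <;> ring
  · refine (Fintype.card_fin 2).symm.trans_le
      (card_le_rank_of_det_submatrix_ne_zero _ ![0, 1] ![0, 1] ?_)
    have hcos := sq_cosine_lt_one_of_triangle hp₁ hp₂ h₁ h₂ h₃
    rw [det_fin_two]
    simp only [submatrix_apply, of_apply, cons_val', cons_val_fin_one, cons_val_zero,
      cons_val_one, mul_one]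
    nlinarith
end

section
/- Let A be a symmetric 3×3 copositive matrix with unit diagonal such that A·(0,1,1)ᵀ = 0. Then A has the form [[1, t, -t],[t, 1, -1],[-t, -1, 1]] for some t with -1 ≤ t ≤ 1. Conversely, every matrix of this form with -1 ≤ t ≤ 1 is copositive with null vector (0,1,1). -/
open Matrix

theorem stmt_16 :
    (∀ A : Matrix (Fin 3) (Fin 3) ℝ, A.IsSymm → (∀ i, A i i = 1) → Copositive A →
      A.mulVec ![0, 1, 1] = 0 →
      ∃ t : ℝ, -1 ≤ t ∧ t ≤ 1 ∧ A = !![1, t, -t; t, 1, -1; -t, -1, 1]) ∧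
    (∀ t : ℝ, -1 ≤ t → t ≤ 1 →
      Copositive !![1, t, -t; t, 1, -1; -t, -1, 1] ∧
      (!![1, t, -t; t, 1, -1; -t, -1, 1] : Matrix (Fin 3) (Fin 3) ℝ).mulVec ![0, 1, 1] = 0) := by
  constructor
  · intro A hsym hdiag hcop hmul
    have hd0 := hdiag 0
    have hd1 := hdiag 1
    have hd2 := hdiag 2
    have hs01 : A 1 0 = A 0 1 := by
      have := congrFun (congrFun hsym 1) 0; simpa [Matrix.transpose_apply] using this.symm
    have hs02 : A 2 0 = A 0 2 := by
      have := congrFun (congrFun hsym 2) 0; simpa [Matrix.transpose_apply] using this.symm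
    have hs12 : A 2 1 = A 1 2 := by
      have := congrFun (congrFun hsym 2) 1; simpa [Matrix.transpose_apply] using this.symm
    have h0 := congrFun hmul 0
    have h1 := congrFun hmul 1
    have h2 := congrFun hmul 2
    simp [Matrix.mulVec, dotProduct, Fin.sum_univ_three] at h0 h1 h2
    -- h1 : A 1 1 + A 1 2 = 0 etc.
    have h12 : A 1 2 = -1 := by linarith
    have h02 : A 0 2 = -(A 0 1) := by linarith
    refine ⟨A 0 1, ?_, ?_, ?_⟩
    · have := hcop ![1, 1, 0] (by
        intro i; fin_cases i <;> norm_num)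
      simp [Matrix.mulVec, dotProduct, Fin.sum_univ_three] at this
      nlinarith [this]
    · have := hcop ![1, 0, 1] (by
        intro i; fin_cases i <;> norm_num)
      simp [Matrix.mulVec, dotProduct, Fin.sum_univ_three] at this
      nlinarith [this]
    · ext i j
      fin_cases i <;> fin_cases j <;>
        simp_all [hs01, hs02, hs12]
  · intro t ht1 ht2
    constructor
    · intro x hx
      simp [Matrix.mulVec, dotProduct, Fin.sum_univ_three]
      nlinarith [sq_nonneg (x 0 + t * (x 1 - x 2)),
        mul_nonneg (by nlinarith : (0:ℝ) ≤ 1 - t * t) (sq_nonneg (x 1 - x 2))]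
    · funext i
      fin_cases i <;> simp [Matrix.mulVec, dotProduct, Fin.sum_univ_three]
end

section
/- For each s = (s₁,s₂,s₃) in the open standard 2-simplex (sᵢ > 0, s₁+s₂+s₃ = 1), there exists t = (t₁,t₂,t₃) in the open standard 2-simplex such that t₃(1-t₁t₂)/((1-t₁)(1-t₂)) = s₁+s₂, t₂(1-t₁t₃)/((1-t₁)(1-t₃)) = s₁+s₃, and t₁(1-t₂t₃)/((1-t₂)(1-t₃)) = s₂+s₃, and this t is unique. -/
noncomputable def fq (s q : ℝ) : ℝ := (q + Real.sqrt (q^2 + 4*q*s*(1-s))) / (2*s)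

lemma fq_pos {s q : ℝ} (hs : 0 < s) (hq : 0 < q) : 0 < fq s q := by
  have h := Real.sqrt_nonneg (q^2 + 4*q*s*(1-s))
  apply div_pos (by linarith) (by linarith)

lemma fq_zero (s : ℝ) : fq s 0 = 0 := by
  unfold fq
  rw [show (0:ℝ)^2 + 4*0*s*(1-s) = 0 by ring, Real.sqrt_zero]
  simp

lemma fq_one_ge {s : ℝ} (hs : 0 < s) (hs1 : s < 1) : 1 ≤ fq s 1 := by
  have hprod : 0 < s * (1 - s) := mul_pos hs (by linarith)
  have h1 : Real.sqrt 1 ≤ Real.sqrt ((1:ℝ)^2 + 4*1*s*(1-s)) :=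
    Real.sqrt_le_sqrt (by nlinarith)
  rw [Real.sqrt_one] at h1
  unfold fq
  rw [le_div_iff₀ (by linarith)]
  nlinarith

lemma fq_quad {s q : ℝ} (hs : 0 < s) (hs1 : s < 1) (hq : 0 ≤ q) :
    s * (fq s q)^2 = q * (fq s q) + q * (1 - s) := by
  have h1s : (0:ℝ) < 1 - s := by linarith
  have hX0 : (0:ℝ) ≤ q^2 + 4*q*s*(1-s) := by
    nlinarith [mul_nonneg (mul_nonneg hq hs.le) h1s.le, sq_nonneg q]
  have hr2 : Real.sqrt (q^2 + 4*q*s*(1-s)) ^ 2 = q^2 + 4*q*s*(1-s) := Real.sq_sqrt hX0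
  have ht : 2*s*(fq s q) = q + Real.sqrt (q^2 + 4*q*s*(1-s)) := by
    unfold fq; field_simp
  have hsq : (2*s*(fq s q) - q)^2 = q^2 + 4*q*s*(1-s) := by
    rw [show 2*s*(fq s q) - q = Real.sqrt (q^2 + 4*q*s*(1-s)) by linarith]
    exact hr2
  have h4 : (4*s) * (s * (fq s q)^2) = (4*s) * (q * (fq s q) + q * (1 - s)) := by
    linear_combination hsq
  exact mul_left_cancel₀ (by positivity) h4

lemma fq_lt {s q q' : ℝ} (hs : 0 < s) (hs1 : s < 1) (hq : 0 < q) (hqq : q < q') :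
    fq s q < fq s q' := by
  have h1s : (0:ℝ) < 1 - s := by linarith
  have hX : q^2 + 4*q*s*(1-s) ≤ q'^2 + 4*q'*s*(1-s) := by
    nlinarith [mul_pos (sub_pos.2 hqq) (mul_pos hs h1s), mul_pos (sub_pos.2 hqq) (add_pos hq (hq.trans hqq))]
  have hle := Real.sqrt_le_sqrt hX
  unfold fq
  rw [div_lt_div_iff₀ (by linarith) (by linarith)]
  nlinarith

lemma fq_unique {s q t : ℝ} (hs : 0 < s) (hs1 : s < 1) (hq : 0 < q) (ht : 0 < t)
    (h : s * t^2 = q*t + q*(1-s)) : t = fq s q := by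
  have h1s : (0:ℝ) < 1 - s := by linarith
  have hX0 : (0:ℝ) ≤ q^2 + 4*q*s*(1-s) := by
    nlinarith [mul_nonneg (mul_nonneg hq.le hs.le) h1s.le, sq_nonneg q]
  have hr2 : Real.sqrt (q^2 + 4*q*s*(1-s)) ^ 2 = q^2 + 4*q*s*(1-s) := Real.sq_sqrt hX0
  have hrq : q ≤ Real.sqrt (q^2 + 4*q*s*(1-s)) := by
    have h := Real.sqrt_le_sqrt (show q^2 ≤ q^2 + 4*q*s*(1-s) by
      nlinarith [mul_nonneg (mul_nonneg hq.le hs.le) h1s.le])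
    rwa [Real.sqrt_sq hq.le] at h
  have hfac : (2*s*t - q - Real.sqrt (q^2 + 4*q*s*(1-s))) *
      (2*s*t - q + Real.sqrt (q^2 + 4*q*s*(1-s))) = 0 := by
    linear_combination 4*s*h - hr2
  rcases mul_eq_zero.1 hfac with h1 | h2
  · have heq : 2*s*t = q + Real.sqrt (q^2 + 4*q*s*(1-s)) := by linarith
    unfold fq
    rw [eq_div_iff (by positivity)]
    linarith
  · exfalso
    have hst : 0 < 2*s*t := by positivity
    linarith

lemma prod_eq {s0 s1 s2 t0 t1 t2 q : ℝ}
    (ht0 : 0 < t0) (ht1 : 0 < t1) (ht2 : 0 < t2) (hq : 0 < q)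
    (hs : s0 + s1 + s2 = 1) (ht : t0 + t1 + t2 = 1)
    (h0 : s0*t0^2 = q*t0 + q*(1-s0))
    (h1 : s1*t1^2 = q*t1 + q*(1-s1))
    (h2 : s2*t2^2 = q*t2 + q*(1-s2)) : t0*t1*t2 = q := by
  have hneg : 0 < t0*t1*t2^3 + t0*t1^2*t2^2 + t0*t1^2*t2^3 + t0*t1^3*t2 + t0*t1^3*t2^2
      + t0^2*t1*t2^2 + t0^2*t1*t2^3 + t0^2*t1^2*t2 + 2*t0^2*t1^2*t2^2 + t0^2*t1^2*t2^3
      + t0^2*t1^3*t2 + t0^2*t1^3*t2^2 + t0^3*t1*t2 + t0^3*t1*t2^2 + t0^3*t1^2*t2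
      + t0^3*t1^2*t2^2 + q*t2^2 + q*t1*t2^2 + q*t1^2 + q*t1^2*t2 + q*t0*t2^2
      + 2*q*t0*t1*t2 + q*t0*t1*t2^2 + q*t0*t1^2 + q*t0*t1^2*t2 + q*t0^2 + q*t0^2*t2
      + q*t0^2*t1 + q*t0^2*t1*t2 + 2*q^2 + q^2*t2 + q^2*t1 + q^2*t0 := by positivity
  have key : (t0*t1*t2 - q) * (t0*t1*t2^3 + t0*t1^2*t2^2 + t0*t1^2*t2^3 + t0*t1^3*t2 + t0*t1^3*t2^2
      + t0^2*t1*t2^2 + t0^2*t1*t2^3 + t0^2*t1^2*t2 + 2*t0^2*t1^2*t2^2 + t0^2*t1^2*t2^3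
      + t0^2*t1^3*t2 + t0^2*t1^3*t2^2 + t0^3*t1*t2 + t0^3*t1*t2^2 + t0^3*t1^2*t2
      + t0^3*t1^2*t2^2 + q*t2^2 + q*t1*t2^2 + q*t1^2 + q*t1^2*t2 + q*t0*t2^2
      + 2*q*t0*t1*t2 + q*t0*t1*t2^2 + q*t0*t1^2 + q*t0*t1^2*t2 + q*t0^2 + q*t0^2*t2
      + q*t0^2*t1 + q*t0^2*t1*t2 + 2*q^2 + q^2*t2 + q^2*t1 + q^2*t0) = 0 := by
    linear_combination (q+t1^2)*(q+t2^2)*h0 + (q+t0^2)*(q+t2^2)*h1 + (q+t0^2)*(q+t1^2)*h2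
      - (q+t0^2)*(q+t1^2)*(q+t2^2)*hs + (t0*t1*t2)^2*(1+t0)*(1+t1)*(1+t2)*ht
  rcases mul_eq_zero.1 key with h | h
  · linarith [sub_eq_zero.1 h]
  · exact absurd h hneg.ne'

theorem stmt_19 (s : Fin 3 → ℝ) (hs : ∀ i, 0 < s i) (hsum : s 0 + s 1 + s 2 = 1) :
    ∃! t : Fin 3 → ℝ,
      (∀ i, 0 < t i) ∧ t 0 + t 1 + t 2 = 1 ∧
      t 2 * (1 - t 0 * t 1) / ((1 - t 0) * (1 - t 1)) = s 0 + s 1 ∧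
      t 1 * (1 - t 0 * t 2) / ((1 - t 0) * (1 - t 2)) = s 0 + s 2 ∧
      t 0 * (1 - t 1 * t 2) / ((1 - t 1) * (1 - t 2)) = s 1 + s 2 := by
  have ha := hs 0
  have hb := hs 1
  have hc := hs 2
  have ha1 : s 0 < 1 := by linarith
  have hb1 : s 1 < 1 := by linarith
  have hc1 : s 2 < 1 := by linarith
  -- the function g
  set g : ℝ → ℝ := fun x => fq (s 0) x + fq (s 1) x + fq (s 2) x with hg
  have hcont : ContinuousOn g (Set.Icc 0 1) := by
    have hone : ∀ c : ℝ, Continuous fun x : ℝ => fq c x := by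
      intro c
      unfold fq
      exact (continuous_id.add ((Real.continuous_sqrt).comp (by continuity))).div_const _
    exact (((hone (s 0)).add (hone (s 1))).add (hone (s 2))).continuousOn
  have hg0 : g 0 = 0 := by simp [hg, fq_zero]
  have hg1 : 1 ≤ g 1 := by
    have h0 := fq_one_ge ha ha1
    have h1 := fq_one_ge hb hb1
    have h2 := fq_one_ge hc hc1
    simp only [hg]; linarith
  have hivt := intermediate_value_Icc (by norm_num : (0:ℝ) ≤ 1) hcont
  have hmem : (1:ℝ) ∈ Set.Icc (g 0) (g 1) := by
    rw [hg0]; exact ⟨by norm_num, hg1⟩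
  obtain ⟨q, hqmem, hgq⟩ := hivt hmem
  have hq0 : 0 < q := by
    rcases lt_or_eq_of_le hqmem.1 with h | h
    · exact h
    · exfalso; rw [← h] at hgq; rw [hg0] at hgq; norm_num at hgq
  -- the candidate
  set t0 := fq (s 0) q with ht0def
  set t1 := fq (s 1) q with ht1def
  set t2 := fq (s 2) q with ht2def
  have ht0 : 0 < t0 := fq_pos ha hq0
  have ht1 : 0 < t1 := fq_pos hb hq0
  have ht2 : 0 < t2 := fq_pos hc hq0
  have htsum : t0 + t1 + t2 = 1 := hgq
  have hE0 : s 0 * t0^2 = q*t0 + q*(1 - s 0) := fq_quad ha ha1 hq0.le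
  have hE1 : s 1 * t1^2 = q*t1 + q*(1 - s 1) := fq_quad hb hb1 hq0.le
  have hE2 : s 2 * t2^2 = q*t2 + q*(1 - s 2) := fq_quad hc hc1 hq0.le
  have hP : t0*t1*t2 = q := prod_eq ht0 ht1 ht2 hq0 hsum htsum hE0 hE1 hE2
  have h1t0 : 0 < 1 - t0 := by linarith
  have h1t1 : 0 < 1 - t1 := by linarith
  have h1t2 : 0 < 1 - t2 := by linarith
  -- divided quadratics
  have hE2' : s 2 * t2 = t0*t1*t2 + t0*t1*(1 - s 2) := by
    apply mul_right_cancel₀ ht2.ne'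
    linear_combination hE2 - (t2 + 1 - s 2) * hP
  have hE1' : s 1 * t1 = t0*t1*t2 + t0*t2*(1 - s 1) := by
    apply mul_right_cancel₀ ht1.ne'
    linear_combination hE1 - (t1 + 1 - s 1) * hP
  have hE0' : s 0 * t0 = t0*t1*t2 + t1*t2*(1 - s 0) := by
    apply mul_right_cancel₀ ht0.ne'
    linear_combination hE0 - (t0 + 1 - s 0) * hP
  refine ⟨![t0, t1, t2], ⟨?_, ?_, ?_, ?_, ?_⟩, ?_⟩
  · intro i; fin_cases i <;> simpa using ‹_›
  · simpa using htsum
  · show t2 * (1 - t0 * t1) / ((1 - t0) * (1 - t1)) = s 0 + s 1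
    rw [div_eq_iff (by positivity)]
    linear_combination hE2' + (1 - s 2) * htsum - (1 - t0)*(1 - t1) * hsum
  · show t1 * (1 - t0 * t2) / ((1 - t0) * (1 - t2)) = s 0 + s 2
    rw [div_eq_iff (by positivity)]
    linear_combination hE1' + (1 - s 1) * htsum - (1 - t0)*(1 - t2) * hsum
  · show t0 * (1 - t1 * t2) / ((1 - t1) * (1 - t2)) = s 1 + s 2
    rw [div_eq_iff (by positivity)]
    linear_combination hE0' + (1 - s 0) * htsum - (1 - t1)*(1 - t2) * hsum
  -- uniqueness
  · rintro u ⟨hup, husum, hu1, hu2, hu3⟩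
    have hu0p := hup 0
    have hu1p := hup 1
    have hu2p := hup 2
    have h1u0 : 0 < 1 - u 0 := by linarith
    have h1u1 : 0 < 1 - u 1 := by linarith
    have h1u2 : 0 < 1 - u 2 := by linarith
    have hq' : 0 < u 0 * u 1 * u 2 := by positivity
    have e1 : u 2 * (1 - u 0 * u 1) = (s 0 + s 1) * ((1 - u 0) * (1 - u 1)) :=
      (div_eq_iff (by positivity)).1 hu1
    have e2 : u 1 * (1 - u 0 * u 2) = (s 0 + s 2) * ((1 - u 0) * (1 - u 2)) :=
      (div_eq_iff (by positivity)).1 hu2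
    have e3 : u 0 * (1 - u 1 * u 2) = (s 1 + s 2) * ((1 - u 1) * (1 - u 2)) :=
      (div_eq_iff (by positivity)).1 hu3
    have hF2 : s 2 * (u 2)^2 = (u 0 * u 1 * u 2) * u 2 + (u 0 * u 1 * u 2) * (1 - s 2) := by
      linear_combination u 2 * (e1 - (1 - s 2) * husum + (1 - u 0)*(1 - u 1) * hsum)
    have hF1 : s 1 * (u 1)^2 = (u 0 * u 1 * u 2) * u 1 + (u 0 * u 1 * u 2) * (1 - s 1) := by
      linear_combination u 1 * (e2 - (1 - s 1) * husum + (1 - u 0)*(1 - u 2) * hsum)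
    have hF0 : s 0 * (u 0)^2 = (u 0 * u 1 * u 2) * u 0 + (u 0 * u 1 * u 2) * (1 - s 0) := by
      linear_combination u 0 * (e3 - (1 - s 0) * husum + (1 - u 1)*(1 - u 2) * hsum)
    have hv0 : u 0 = fq (s 0) (u 0 * u 1 * u 2) := fq_unique ha ha1 hq' hu0p hF0
    have hv1 : u 1 = fq (s 1) (u 0 * u 1 * u 2) := fq_unique hb hb1 hq' hu1p hF1
    have hv2 : u 2 = fq (s 2) (u 0 * u 1 * u 2) := fq_unique hc hc1 hq' hu2p hF2
    have hqq : u 0 * u 1 * u 2 = q := by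
      rcases lt_trichotomy (u 0 * u 1 * u 2) q with h | h | h
      · exfalso
        have l0 := fq_lt ha ha1 hq' h
        have l1 := fq_lt hb hb1 hq' h
        have l2 := fq_lt hc hc1 hq' h
        rw [← hv0] at l0; rw [← hv1] at l1; rw [← hv2] at l2
        have : u 0 + u 1 + u 2 < t0 + t1 + t2 := by linarith
        rw [husum, htsum] at this; exact lt_irrefl 1 this
      · exact h
      · exfalso
        have l0 := fq_lt ha ha1 hq0 h
        have l1 := fq_lt hb hb1 hq0 h
        have l2 := fq_lt hc hc1 hq0 h
        rw [← hv0] at l0; rw [← hv1] at l1; rw [← hv2] at l2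
        have : t0 + t1 + t2 < u 0 + u 1 + u 2 := by linarith
        rw [husum, htsum] at this; exact lt_irrefl 1 this
    funext i
    fin_cases i
    · show u 0 = t0
      rw [hv0, hqq]
    · show u 1 = t1
      rw [hv1, hqq]
    · show u 2 = t2
      rw [hv2, hqq]
end
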